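/- Suppose a_N ~ N^{-q} (i.e., a_N·N^q → 1) for some 0 < q < 1, and let σ(N) be positive random variables with σ(N)·a_{σ(N)}/N → 1 in probability and σ(N) → ∞ in probability. Then σ(N)/N^{1/(1-q)} → 1 in probability. -/

import Mathlib

open MeasureTheory Filter

set_option maxHeartbeats 1000000

theorem stmt_5 {Ω : Type*} [MeasurableSpace Ω] (μ : Measure Ω) [IsProbabilityMeasure μ]
    (q : ℝ) (hq0 : 0 < q) (hq1 : q < 1)
    (a : ℕ → ℝ) (ha : ∀ n, 0 < a n)
    (haq : Tendsto (fun N : ℕ => a N * (N : ℝ) ^ q) atTop (nhds 1))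
    (σ : ℕ → Ω → ℕ) (hσpos : ∀ N ω, 0 < σ N ω)
    (hmain : TendstoInMeasure μ
      (fun N ω => (σ N ω : ℝ) * a (σ N ω) / N) atTop (fun _ => (1:ℝ)))
    (hinf : ∀ K : ℕ, Tendsto (fun N => μ {ω | σ N ω ≤ K}) atTop (nhds 0)) :
    TendstoInMeasure μ
      (fun N ω => (σ N ω : ℝ) / (N : ℝ) ^ (1 / (1 - q))) atTop (fun _ => (1:ℝ)) := by
  rw [tendstoInMeasure_iff_dist] at hmain ⊢
  intro ε hε
  set p : ℝ := 1 / (1 - q) with hp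
  have h1q : (0:ℝ) < 1 - q := by linarith
  have hp1 : p * (1 - q) = 1 := by
    rw [hp]; field_simp
  -- auxiliary quantities
  set ε' : ℝ := min ε (1/2) with hε'def
  have hε'pos : 0 < ε' := lt_min hε (by norm_num)
  have hε'le : ε' ≤ ε := min_le_left _ _
  have hε'half : ε' ≤ 1/2 := min_le_right _ _
  set c₁ : ℝ := (1 - ε') ^ (1 - q) with hc₁def
  set c₂ : ℝ := (1 + ε') ^ (1 - q) with hc₂def
  have hc₁pos : 0 < c₁ := Real.rpow_pos_of_pos (by linarith) _
  have hc₁lt : c₁ < 1 := Real.rpow_lt_one (by linarith) (by linarith) h1q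
  have hc₂gt : 1 < c₂ := by
    rw [hc₂def]
    exact Real.one_lt_rpow_iff_of_pos (by linarith) |>.mpr (Or.inl ⟨by linarith, h1q⟩)
  have hc₂le2 : c₂ ≤ 2 := by
    have : c₂ ≤ (1 + ε') ^ (1:ℝ) :=
      Real.rpow_le_rpow_of_exponent_le (by linarith) (by linarith)
    rw [Real.rpow_one] at this
    linarith
  set δ : ℝ := min ((1 - c₁)/4) ((c₂ - 1)/4) with hδdef
  have hδpos : 0 < δ := lt_min (by linarith) (by linarith)
  have hδ1 : δ ≤ (1 - c₁)/4 := min_le_left _ _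
  have hδ2 : δ ≤ (c₂ - 1)/4 := min_le_right _ _
  set η : ℝ := δ / 2 with hηdef
  have hηpos : 0 < η := by positivity
  have hη1 : η < 1 := by nlinarith
  -- pick K from haq
  obtain ⟨K₀, hK₀⟩ := Metric.tendsto_atTop.mp haq η hηpos
  set K : ℕ := max K₀ 1 with hKdef
  have hK1 : 1 ≤ K := le_max_right _ _
  -- squeeze
  have hupper : Tendsto (fun N => μ {ω | σ N ω ≤ K}
      + μ {ω | δ ≤ dist ((σ N ω : ℝ) * a (σ N ω) / N) 1}) atTop (nhds 0) := by
    have := (hinf K).add (hmain δ hδpos)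
    simpa using this
  refine tendsto_of_tendsto_of_tendsto_of_le_of_le' tendsto_const_nhds hupper
    (Eventually.of_forall fun N => zero_le) ?_
  filter_upwards [eventually_ge_atTop K] with N hNK
  refine le_trans (measure_mono ?_) (measure_union_le _ _)
  intro ω hω
  simp only [Set.mem_setOf_eq] at hω
  by_cases hσK : σ N ω ≤ K
  · exact Or.inl hσK
  · right
    push_neg at hσK
    have hσK' : K ≤ σ N ω := hσK.le
    set s : ℝ := (σ N ω : ℝ) with hsdef
    set A : ℝ := a (σ N ω) with hAdef
    have hs1 : (1:ℝ) ≤ s := by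
      rw [hsdef]; exact_mod_cast le_trans hK1 hσK'
    have hspos : (0:ℝ) < s := by linarith
    have hN1 : (1:ℝ) ≤ (N:ℝ) := by exact_mod_cast le_trans hK1 hNK
    have hNpos : (0:ℝ) < (N:ℝ) := by linarith
    have hNppos : (0:ℝ) < (N:ℝ) ^ p := Real.rpow_pos_of_pos hNpos _
    -- the multiplicative error G
    have hG : dist (A * s ^ q) 1 < η :=
      hK₀ (σ N ω) (le_trans (le_max_left _ _) hσK')
    rw [Real.dist_eq, abs_lt] at hG
    have hmul : s * A = (A * s ^ q) * s ^ (1 - q) := by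
      have hss : s ^ q * s ^ (1 - q) = s := by
        rw [← Real.rpow_add hspos]
        norm_num
      rw [mul_assoc, hss, mul_comm]
    have hNp : ((N:ℝ) ^ p) ^ (1 - q) = (N:ℝ) := by
      rw [← Real.rpow_mul (Nat.cast_nonneg N), hp1, Real.rpow_one]
    rw [Real.dist_eq] at hω
    simp only [Set.mem_setOf_eq, Real.dist_eq]
    rcases le_abs.mp hω with hcase | hcase
    · -- upper case : s large
      have hsge : (1 + ε') * (N:ℝ) ^ p ≤ s := by
        have : 1 + ε ≤ s / (N:ℝ) ^ p := by linarith
        have h2 : (1 + ε') * (N:ℝ) ^ p ≤ (s / (N:ℝ) ^ p) * (N:ℝ) ^ p := by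
          apply mul_le_mul_of_nonneg_right _ hNppos.le
          linarith
        rwa [div_mul_cancel₀ _ (ne_of_gt hNppos)] at h2
      have hsq : c₂ * (N:ℝ) ≤ s ^ (1 - q) := by
        have h1 : ((1 + ε') * (N:ℝ) ^ p) ^ (1 - q) ≤ s ^ (1 - q) :=
          Real.rpow_le_rpow (by positivity) hsge h1q.le
        rwa [Real.mul_rpow (by linarith) hNppos.le, hNp] at h1
      have hbig : (1 + δ) * (N:ℝ) ≤ s * A := by
        rw [hmul]
        have h1 : (1 - η) * (c₂ * (N:ℝ)) ≤ (A * s ^ q) * s ^ (1 - q) :=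
          mul_le_mul (by linarith) hsq (by positivity) (by linarith)
        nlinarith [mul_nonneg (mul_nonneg hηpos.le hNpos.le) (by linarith : (0:ℝ) ≤ 2 - c₂),
          mul_nonneg hNpos.le (by linarith : (0:ℝ) ≤ c₂ - 1 - 4*δ),
          mul_nonneg hδpos.le hNpos.le]
      refine le_abs.mpr (Or.inl ?_)
      have : 1 + δ ≤ s * A / (N:ℝ) := (le_div_iff₀ hNpos).mpr (by linarith)
      linarith
    · -- lower case : s small
      have hsle : s ≤ (1 - ε') * (N:ℝ) ^ p := by
        have : s / (N:ℝ) ^ p ≤ 1 - ε := by linarith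
        have h2 : (s / (N:ℝ) ^ p) * (N:ℝ) ^ p ≤ (1 - ε') * (N:ℝ) ^ p := by
          apply mul_le_mul_of_nonneg_right _ hNppos.le
          linarith
        rwa [div_mul_cancel₀ _ (ne_of_gt hNppos)] at h2
      have hsq : s ^ (1 - q) ≤ c₁ * (N:ℝ) := by
        have h1 : s ^ (1 - q) ≤ ((1 - ε') * (N:ℝ) ^ p) ^ (1 - q) :=
          Real.rpow_le_rpow hspos.le hsle h1q.le
        rwa [Real.mul_rpow (by linarith) hNppos.le, hNp] at h1
      have hsmall : s * A ≤ (1 - δ) * (N:ℝ) := by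
        rw [hmul]
        have h1 : (A * s ^ q) * s ^ (1 - q) ≤ (1 + η) * (c₁ * (N:ℝ)) :=
          mul_le_mul (by linarith) hsq (by positivity) (by linarith)
        nlinarith [mul_nonneg (mul_nonneg hηpos.le hNpos.le) (by linarith : (0:ℝ) ≤ 1 - c₁),
          mul_nonneg hNpos.le (by linarith : (0:ℝ) ≤ 1 - c₁ - 4*δ),
          mul_nonneg hδpos.le hNpos.le]
      refine le_abs.mpr (Or.inr ?_)
      have : s * A / (N:ℝ) ≤ 1 - δ := (div_le_iff₀ hNpos).mpr (by linarith)
      linarith
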